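/- Fix n ≥ 1 and k ∈ {1, …, 2n}. The linear functional φ_k : Z_n → ℂ given by φ_k(z) = z_k (the k-th coordinate) is a pure state on Z_n: φ_k is unital and positive, and whenever ϑ, ω : Z_n → ℂ are positive linear functionals (meaning ϑ(z) ≥ 0 and ω(z) ≥ 0 for every z ∈ Z_n all of whose coordinates are nonnegative reals) with ϑ + ω = φ_k, there exists s ∈ [0,1] such that ϑ = s·φ_k and ω = (1−s)·φ_k. -/

import Mathlib

open scoped ComplexOrder

/-- The vector `(α+β₁, α−β₁, …, α+βₙ, α−βₙ) ∈ ℂ^{2n}`, with coordinates indexed by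
`Fin n × Fin 2` (the pair `(k, 0)` is the coordinate `α+βₖ` and `(k, 1)` is `α−βₖ`). -/
def zVec (n : ℕ) (α : ℂ) (β : Fin n → ℂ) : Fin n × Fin 2 → ℂ :=
  fun p => if p.2 = 0 then α + β p.1 else α - β p.1

/-- The operator system `Zₙ = { (α+β₁, α−β₁, …, α+βₙ, α−βₙ) } ⊆ ℓ^∞(2n) = ℂ^{2n}`. -/
noncomputable def ZSys (n : ℕ) : Submodule ℂ (Fin n × Fin 2 → ℂ) :=
  Submodule.span ℂ {x | ∃ α β, x = zVec n α β}

theorem one_mem_ZSys (n : ℕ) : (fun _ => (1 : ℂ)) ∈ ZSys n :=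
  Submodule.subset_span ⟨1, 0, by funext p; simp [zVec]⟩

/-- The `k`-th coordinate functional on `Zₙ`. -/
noncomputable def coordState (n : ℕ) (k : Fin n × Fin 2) : ZSys n →ₗ[ℂ] ℂ :=
  (LinearMap.proj k : (Fin n × Fin 2 → ℂ) →ₗ[ℂ] ℂ).comp (ZSys n).subtype

/-- A linear functional on `Zₙ` is positive if it is nonnegative on every element of
`Zₙ` all of whose coordinates are nonnegative reals. -/
def IsPosFunctional {n : ℕ} (ϑ : ZSys n →ₗ[ℂ] ℂ) : Prop :=
  ∀ z : ZSys n, (∀ i, 0 ≤ (z : Fin n × Fin 2 → ℂ) i) → 0 ≤ ϑ z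

/-!
If `ϑ + ω = φ_k` with `ϑ, ω` positive, then `0 ≤ ϑ z ≤ φ_k z = 0` for every positive `z ∈ Zₙ`
with `z_k = 0`. Such elements span `ker φ_k`: writing `k = (m, i)`, take the vector `p` with
coordinate `0` at `k`, `2` at `(m, 1 - i)` and `1` elsewhere, together with `p + eⱼ` for `j ≠ m`,
where `eⱼ = zVec n 0 (Pi.single j 1)`. Hence `ϑ - ϑ(1) φ_k`, which also vanishes at `1`, is zero,
and `ϑ(1), ω(1)` are nonnegative reals adding up to `1`.
-/

namespace ZSys

variable {n : ℕ}

def sign (i : Fin 2) : ℂ := if i = 0 then 1 else -1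

lemma sign_mul_sign (i : Fin 2) : sign i * sign i = 1 := by
  unfold sign; split_ifs <;> norm_num

lemma zVec_apply (α : ℂ) (β : Fin n → ℂ) (x : Fin n × Fin 2) :
    zVec n α β x = α + sign x.2 * β x.1 := by
  unfold zVec sign; split_ifs <;> ring

variable (n) in
noncomputable def mk : ℂ × (Fin n → ℂ) →ₗ[ℂ] ZSys n where
  toFun p := ⟨zVec n p.1 p.2, Submodule.subset_span ⟨p.1, p.2, rfl⟩⟩
  map_add' p q := by ext x; simp [zVec_apply]; ring
  map_smul' c p := by ext x; simp [zVec_apply]; ring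

lemma coe_mk_apply (p : ℂ × (Fin n → ℂ)) (x : Fin n × Fin 2) :
    (mk n p : Fin n × Fin 2 → ℂ) x = p.1 + sign x.2 * p.2 x.1 :=
  zVec_apply _ _ _

lemma mk_one_zero_nonneg (x : Fin n × Fin 2) : 0 ≤ (mk n (1, 0) : Fin n × Fin 2 → ℂ) x := by
  simp [coe_mk_apply]

lemma mk_surjective : Function.Surjective (mk n) := by
  rintro ⟨z, hz⟩
  suffices ∃ p, (mk n p : Fin n × Fin 2 → ℂ) = z from this.imp fun _ => Subtype.ext
  induction hz using Submodule.span_induction with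
  | mem x hx => obtain ⟨α, β, rfl⟩ := hx; exact ⟨(α, β), rfl⟩
  | zero => exact ⟨0, by simp⟩
  | add x y _ _ hx hy =>
    obtain ⟨p, hp⟩ := hx; obtain ⟨q, hq⟩ := hy
    exact ⟨p + q, by simp [hp, hq]⟩
  | smul c x _ hx => obtain ⟨p, hp⟩ := hx; exact ⟨c • p, by simp [hp]⟩

variable (n) in
noncomputable def basisVec (j : Fin n) : ZSys n := mk n (0, Pi.single j 1)

lemma linearMap_ext {M : Type*} [AddCommMonoid M] [Module ℂ M] {f g : ZSys n →ₗ[ℂ] M}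
    (h₀ : f (mk n (1, 0)) = g (mk n (1, 0))) (h : ∀ j, f (basisVec n j) = g (basisVec n j)) :
    f = g := by
  refine (LinearMap.cancel_right mk_surjective).1 ?_
  ext j
  · exact h₀
  · exact h j

lemma coordState_mk (k : Fin n × Fin 2) (p : ℂ × (Fin n → ℂ)) :
    coordState n k (mk n p) = p.1 + sign k.2 * p.2 k.1 :=
  coe_mk_apply p k

/-- The element of `Zₙ` with coordinate `0` at `k`, `2` at `(k.1, 1 - k.2)` and `1` elsewhere. -/
noncomputable def nullVec (k : Fin n × Fin 2) : ZSys n := mk n (1, Pi.single k.1 (-sign k.2))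

lemma coordState_nullVec (k : Fin n × Fin 2) : coordState n k (nullVec k) = 0 := by
  simp [nullVec, coordState_mk, sign_mul_sign]

lemma coordState_nullVec_add_basisVec {k : Fin n × Fin 2} {j : Fin n} (hj : j ≠ k.1) :
    coordState n k (nullVec k + basisVec n j) = 0 := by
  simp [map_add, coordState_nullVec, basisVec, coordState_mk, Ne.symm hj]

lemma nullVec_nonneg (k : Fin n × Fin 2) (x : Fin n × Fin 2) :
    0 ≤ (nullVec k : Fin n × Fin 2 → ℂ) x := by
  rcases k with ⟨m, i⟩
  rcases x with ⟨l, i'⟩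
  simp only [nullVec, coe_mk_apply, Pi.single_apply]
  split_ifs
  all_goals fin_cases i <;> fin_cases i' <;> norm_num [sign]

lemma nullVec_add_basisVec_nonneg {k : Fin n × Fin 2} {j : Fin n} (hj : j ≠ k.1)
    (x : Fin n × Fin 2) : 0 ≤ (nullVec k + basisVec n j : Fin n × Fin 2 → ℂ) x := by
  rcases k with ⟨m, i⟩
  rcases x with ⟨l, i'⟩
  simp only [nullVec, basisVec, Pi.add_apply, coe_mk_apply, Pi.single_apply]
  split_ifs with hlm hlj
  · exact absurd (hlj.symm.trans hlm) hj
  all_goals fin_cases i <;> fin_cases i' <;> norm_num [sign]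

lemma eq_zero_of_apply_nullVec {M : Type*} [AddCommGroup M] [Module ℂ M] {f : ZSys n →ₗ[ℂ] M}
    {k : Fin n × Fin 2} (h₀ : f (mk n (1, 0)) = 0) (h₁ : f (nullVec k) = 0)
    (h₂ : ∀ j ≠ k.1, f (nullVec k + basisVec n j) = 0) : f = 0 := by
  refine linearMap_ext h₀ fun j => ?_
  by_cases hj : j = k.1
  · have : basisVec n j = sign k.2 • (mk n (1, 0) - nullVec k) := by
      rw [nullVec, ← map_sub, ← map_smul, basisVec, hj]
      congr 1
      ext l
      · simp
      · by_cases hl : l = k.1 <;> simp [hl, sign_mul_sign]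
    rw [this, map_smul, map_sub, h₀, h₁, sub_zero, smul_zero, LinearMap.zero_apply]
  · rw [← add_sub_cancel_left (nullVec k) (basisVec n j), map_sub, h₂ j hj, h₁, sub_zero,
      LinearMap.zero_apply]

end ZSys

open ZSys

lemma IsPosFunctional.apply_eq_zero_of_add_eq {n : ℕ} {ϑ ω φ : ZSys n →ₗ[ℂ] ℂ}
    (hϑ : IsPosFunctional ϑ) (hω : IsPosFunctional ω) (hsum : ϑ + ω = φ) {z : ZSys n}
    (hz : ∀ i, 0 ≤ (z : Fin n × Fin 2 → ℂ) i) (hφz : φ z = 0) : ϑ z = 0 :=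
  ((add_eq_zero_iff_of_nonneg (hϑ z hz) (hω z hz)).1 (by rw [← hφz, ← hsum]; rfl)).1

lemma IsPosFunctional.eq_smul_coordState_of_add_eq {n : ℕ} {k : Fin n × Fin 2}
    {ϑ ω : ZSys n →ₗ[ℂ] ℂ} (hϑ : IsPosFunctional ϑ) (hω : IsPosFunctional ω)
    (hsum : ϑ + ω = coordState n k) : ϑ = ϑ (mk n (1, 0)) • coordState n k := by
  have hker : ∀ z : ZSys n, (∀ i, 0 ≤ (z : Fin n × Fin 2 → ℂ) i) → coordState n k z = 0 →
      (ϑ - ϑ (mk n (1, 0)) • coordState n k) z = 0 := fun z hz hφz => by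
    simp [hϑ.apply_eq_zero_of_add_eq hω hsum hz hφz, hφz]
  refine sub_eq_zero.1 (eq_zero_of_apply_nullVec (k := k) ?_ ?_ fun j hj => ?_)
  · simp [coordState_mk]
  · exact hker _ (nullVec_nonneg k) (coordState_nullVec k)
  · exact hker _ (nullVec_add_basisVec_nonneg hj) (coordState_nullVec_add_basisVec hj)

theorem coordinate_functional_is_pure_state_general (n : ℕ) (k : Fin n × Fin 2) :
    coordState n k ⟨fun _ => 1, one_mem_ZSys n⟩ = 1 ∧
    IsPosFunctional (coordState n k) ∧
    ∀ ϑ ω : ZSys n →ₗ[ℂ] ℂ, IsPosFunctional ϑ → IsPosFunctional ω →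
      ϑ + ω = coordState n k →
      ∃ s : ℝ, 0 ≤ s ∧ s ≤ 1 ∧
        ϑ = (s : ℂ) • coordState n k ∧ ω = ((1 - s : ℝ) : ℂ) • coordState n k := by
  refine ⟨rfl, fun z hz => hz k, fun ϑ ω hϑ hω hsum => ?_⟩
  have hϑ₀ := hϑ _ mk_one_zero_nonneg
  have hω₀ := hω _ mk_one_zero_nonneg
  obtain ⟨s, hs⟩ : ∃ s : ℝ, ϑ (mk n (1, 0)) = s := ⟨_, Complex.eq_re_of_ofReal_le hϑ₀⟩
  have hω_eq : ω (mk n (1, 0)) = ((1 - s : ℝ) : ℂ) := by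
    have := LinearMap.congr_fun hsum (mk n (1, 0))
    simp only [LinearMap.add_apply, coordState_mk, hs, Pi.zero_apply, mul_zero, add_zero] at this
    push_cast
    linear_combination this
  refine ⟨s, ?_, ?_, ?_, ?_⟩
  · exact_mod_cast hs ▸ hϑ₀
  · have : (0 : ℝ) ≤ 1 - s := by exact_mod_cast hω_eq ▸ hω₀
    linarith
  · rw [← hs]; exact hϑ.eq_smul_coordState_of_add_eq hω hsum
  · rw [← hω_eq]; exact hω.eq_smul_coordState_of_add_eq hϑ ((add_comm ω ϑ).trans hsum)

/-- Each coordinate functional `φ_k(z) = z_k` is a pure state on `Zₙ`: it is unital and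
positive, and any decomposition of it as a sum of two positive linear functionals
consists of scalar multiples of `φ_k`. -/
theorem coordinate_functional_is_pure_state (n : ℕ) (hn : 1 ≤ n) (k : Fin n × Fin 2) :
    coordState n k ⟨fun _ => 1, one_mem_ZSys n⟩ = 1 ∧
    IsPosFunctional (coordState n k) ∧
    ∀ ϑ ω : ZSys n →ₗ[ℂ] ℂ, IsPosFunctional ϑ → IsPosFunctional ω →
      ϑ + ω = coordState n k →
      ∃ s : ℝ, 0 ≤ s ∧ s ≤ 1 ∧
        ϑ = (s : ℂ) • coordState n k ∧ ω = ((1 - s : ℝ) : ℂ) • coordState n k :=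
  coordinate_functional_is_pure_state_general n k
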